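/- arXiv:2008.06851 — 6 statements merged into one kernel-verified Lean document; each statement's English description precedes it below -/
import Mathlib

section
/- Let p be a positive integer, κ ≥ 1 a real number, and N a norm on p×p real matrices that is orthogonally invariant, i.e. N(U A V) = N(A) for all orthogonal p×p matrices U, V. Let S be a symmetric p×p real matrix with spectral decomposition S = U · diag(λ̂₁,…,λ̂_p) · Uᵀ, where U is orthogonal and λ̂₁ ≥ λ̂₂ ≥ ⋯ ≥ λ̂_p. Let G := {Σ : Σ is a symmetric positive semidefinite p×p real matrix with λ_max(Σ) ≤ κ·λ_min(Σ)}, and assume the zero matrix is NOT a minimizer of Σ ↦ N(Σ − S) over G. If Λ* = diag(λ*₁,…,λ*_p) minimizes N(Λ − diag(λ̂₁,…,λ̂_p)) over all diagonal matrices Λ = diag(λ₁,…,λ_p) satisfying minᵢ λᵢ ≥ 0 and maxᵢ λᵢ ≤ κ·minᵢ λᵢ, then U Λ* Uᵀ is a minimizer of Σ ↦ N(Σ − S) over G. -/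
/-!
Conjugating by `U` reduces everything to the basis in which `S` is diagonal. There, a competitor
`M ∈ G` becomes `B = Uᵀ M U`, whose diagonal is feasible for the diagonal problem because every
diagonal entry of a symmetric matrix lies between its extreme eigenvalues. Averaging `B - Λ̂`
with its conjugates by the sign flips `diag(1, …, -1, …, 1)` kills the off-diagonal entries
one row and column at a time, so by invariance and the triangle inequality
`N (diag B - Λ̂) ≤ N (B - Λ̂) = N (M - S)`.
-/

open Matrix

/-- The largest eigenvalue of a (symmetric) real matrix, as the supremum of its spectrum. -/
noncomputable def lamMax {p : ℕ} (A : Matrix (Fin p) (Fin p) ℝ) : ℝ := sSup (spectrum ℝ A)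

/-- The smallest eigenvalue of a (symmetric) real matrix, as the infimum of its spectrum. -/
noncomputable def lamMin {p : ℕ} (A : Matrix (Fin p) (Fin p) ℝ) : ℝ := sInf (spectrum ℝ A)

namespace Matrix

section Pinching

variable {n : Type*} [DecidableEq n]

def signFlip (a : n) : Matrix n n ℝ := diagonal fun k => if k = a then -1 else 1

def pinch (s : Finset n) (A : Matrix n n ℝ) : Matrix n n ℝ :=
  of fun i j => if i = j ∨ (i ∉ s ∧ j ∉ s) then A i j else 0

theorem pinch_empty (A : Matrix n n ℝ) : pinch ∅ A = A := by
  ext i j; simp [pinch]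

variable [Fintype n]

theorem signFlip_transpose_mul_self (a : n) : (signFlip a)ᵀ * signFlip a = 1 := by
  rw [signFlip, diagonal_transpose, diagonal_mul_diagonal, ← diagonal_one]
  congr 1
  ext k
  split_ifs <;> norm_num

theorem pinch_univ (A : Matrix n n ℝ) : pinch Finset.univ A = diagonal A.diag := by
  ext i j
  by_cases h : i = j
  · subst h; simp [pinch]
  · simp [pinch, h]

theorem pinch_insert {a : n} {s : Finset n} (ha : a ∉ s) (A : Matrix n n ℝ) :
    pinch (insert a s) A = (2⁻¹ : ℝ) • (pinch s A + signFlip a * pinch s A * signFlip a) := by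
  ext i j
  simp only [pinch, signFlip, diagonal_mul, mul_diagonal, smul_apply, add_apply, of_apply,
    Finset.mem_insert, smul_eq_mul]
  split_ifs <;> simp_all <;> ring

variable (N : Matrix n n ℝ → ℝ)

theorem apply_pinch_le (hNsmul : ∀ (c : ℝ) (A : Matrix n n ℝ), N (c • A) = |c| * N A)
    (hNadd : ∀ A B, N (A + B) ≤ N A + N B)
    (hNinv : ∀ U V A : Matrix n n ℝ, Uᵀ * U = 1 → Vᵀ * V = 1 → N (U * A * V) = N A)
    (s : Finset n) (A : Matrix n n ℝ) : N (pinch s A) ≤ N A := by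
  induction s using Finset.induction_on with
  | empty => rw [pinch_empty]
  | insert a s ha ih =>
    have hflip := hNinv _ _ (pinch s A) (signFlip_transpose_mul_self a)
      (signFlip_transpose_mul_self a)
    have htri := hNadd (pinch s A) (signFlip a * pinch s A * signFlip a)
    rw [pinch_insert ha, hNsmul, abs_of_pos (by norm_num)]
    linarith

theorem apply_diagonal_diag_le (hNsmul : ∀ (c : ℝ) (A : Matrix n n ℝ), N (c • A) = |c| * N A)
    (hNadd : ∀ A B, N (A + B) ≤ N A + N B)
    (hNinv : ∀ U V A : Matrix n n ℝ, Uᵀ * U = 1 → Vᵀ * V = 1 → N (U * A * V) = N A)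
    (A : Matrix n n ℝ) : N (diagonal A.diag) ≤ N A :=
  pinch_univ A ▸ apply_pinch_le N hNsmul hNadd hNinv Finset.univ A

end Pinching

theorem spectrum_transpose_mul_mul {n R : Type*} [Fintype n] [DecidableEq n] [CommRing R]
    {U : Matrix n n R} (hU : Uᵀ * U = 1) (A : Matrix n n R) :
    spectrum R (Uᵀ * A * U) = spectrum R A :=
  spectrum.units_conjugate (u := ⟨Uᵀ, U, hU, mul_eq_one_comm.mp hU⟩)

end Matrix

theorem sSup_range_le_mul_sInf_range {ι : Type*} [Finite ι] {f : ι → ℝ} {κ : ℝ}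
    (h : ∀ i j, f i ≤ κ * f j) : sSup (Set.range f) ≤ κ * sInf (Set.range f) := by
  cases isEmpty_or_nonempty ι
  · simp [Set.range_eq_empty]
  · obtain ⟨i, hi⟩ := (Set.range_nonempty f).csSup_mem (Set.finite_range f)
    obtain ⟨j, hj⟩ := (Set.range_nonempty f).csInf_mem (Set.finite_range f)
    rw [← hi, ← hj]
    exact h i j

section ExtremeEigenvalues

open scoped MatrixOrder

variable {p : ℕ}

theorem Matrix.IsHermitian.diag_le_lamMax {B : Matrix (Fin p) (Fin p) ℝ} (hB : B.IsHermitian)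
    (i : Fin p) : B i i ≤ lamMax B := by
  have hle : B ≤ algebraMap ℝ _ (lamMax B) :=
    le_algebraMap_of_spectrum_le (fun _ hx => le_csSup B.finite_real_spectrum.bddAbove hx)
      hB.isSelfAdjoint
  simpa [algebraMap_eq_diagonal] using (le_iff.mp hle).diag_nonneg (i := i)

theorem Matrix.IsHermitian.lamMin_le_diag {B : Matrix (Fin p) (Fin p) ℝ} (hB : B.IsHermitian)
    (i : Fin p) : lamMin B ≤ B i i := by
  have hle : algebraMap ℝ _ (lamMin B) ≤ B :=
    algebraMap_le_of_le_spectrum (fun _ hx => csInf_le B.finite_real_spectrum.bddBelow hx)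
      hB.isSelfAdjoint
  simpa [algebraMap_eq_diagonal] using (le_iff.mp hle).diag_nonneg (i := i)

theorem Matrix.IsHermitian.diag_le_mul_diag {B : Matrix (Fin p) (Fin p) ℝ} (hB : B.IsHermitian)
    {κ : ℝ} (hκ : 0 ≤ κ) (hBκ : lamMax B ≤ κ * lamMin B) (i j : Fin p) :
    B i i ≤ κ * B j j :=
  calc B i i ≤ lamMax B := hB.diag_le_lamMax i
    _ ≤ κ * lamMin B := hBκ
    _ ≤ κ * B j j := mul_le_mul_of_nonneg_left (hB.lamMin_le_diag j) hκ

theorem lamMax_conj_diagonal_le {U : Matrix (Fin p) (Fin p) ℝ} (hU : U * Uᵀ = 1)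
    {lam : Fin p → ℝ} {κ : ℝ} (h : ∀ i j, lam i ≤ κ * lam j) :
    lamMax (U * diagonal lam * Uᵀ) ≤ κ * lamMin (U * diagonal lam * Uᵀ) := by
  have hspec : spectrum ℝ (U * diagonal lam * Uᵀ) = Set.range lam := by
    simpa using spectrum_transpose_mul_mul (U := Uᵀ) (by rwa [transpose_transpose]) (diagonal lam)
  rw [lamMax, lamMin, hspec]
  exact sSup_range_le_mul_sInf_range h

end ExtremeEigenvalues

theorem stmt0_general {p : ℕ} (κ : ℝ) (hκ : 1 ≤ κ)
    (N : Matrix (Fin p) (Fin p) ℝ → ℝ)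
    -- N is a norm:
    (hNsmul : ∀ (c : ℝ) (A : Matrix (Fin p) (Fin p) ℝ), N (c • A) = |c| * N A)
    (hNadd : ∀ A B, N (A + B) ≤ N A + N B)
    -- N is orthogonally invariant:
    (hNinv : ∀ (U V A : Matrix (Fin p) (Fin p) ℝ),
      Uᵀ * U = 1 → Vᵀ * V = 1 → N (U * A * V) = N A)
    (S U : Matrix (Fin p) (Fin p) ℝ) (lamhat : Fin p → ℝ)
    (hU : Uᵀ * U = 1)
    (hS : S = U * Matrix.diagonal lamhat * Uᵀ)
    (G : Set (Matrix (Fin p) (Fin p) ℝ))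
    (hG : G = {M : Matrix (Fin p) (Fin p) ℝ | M.PosSemidef ∧ lamMax M ≤ κ * lamMin M})
    (lamstar : Fin p → ℝ)
    -- Λ* is feasible:
    (hfeas₁ : ∀ i, 0 ≤ lamstar i)
    (hfeas₂ : ∀ i j, lamstar i ≤ κ * lamstar j)
    -- Λ* minimizes over feasible diagonal matrices:
    (hmin : ∀ lam : Fin p → ℝ, (∀ i, 0 ≤ lam i) → (∀ i j, lam i ≤ κ * lam j) →
      N (Matrix.diagonal lamstar - Matrix.diagonal lamhat) ≤
        N (Matrix.diagonal lam - Matrix.diagonal lamhat)) :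
    U * Matrix.diagonal lamstar * Uᵀ ∈ G ∧
      ∀ M ∈ G, N (U * Matrix.diagonal lamstar * Uᵀ - S) ≤ N (M - S) := by
  subst hG
  have hUt : (Uᵀ)ᵀ * Uᵀ = 1 := by rw [transpose_transpose, mul_eq_one_comm.mp hU]
  refine ⟨⟨?_, lamMax_conj_diagonal_le (mul_eq_one_comm.mp hU) hfeas₂⟩, ?_⟩
  · simpa [conjTranspose_eq_transpose_of_trivial] using
      (PosSemidef.diagonal hfeas₁).mul_mul_conjTranspose_same U
  rintro M ⟨hMpsd, hMκ⟩
  set B := Uᵀ * M * U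
  have hBpsd : B.PosSemidef := by
    simpa [conjTranspose_eq_transpose_of_trivial] using hMpsd.mul_mul_conjTranspose_same Uᵀ
  have hBκ : lamMax B ≤ κ * lamMin B := by
    rwa [lamMax, lamMin, spectrum_transpose_mul_mul hU]
  have hMS : Uᵀ * (M - S) * U = B - diagonal lamhat := by
    rw [hS, mul_sub, sub_mul, show Uᵀ * (U * diagonal lamhat * Uᵀ) * U
      = (Uᵀ * U) * diagonal lamhat * (Uᵀ * U) by noncomm_ring, hU, one_mul, mul_one]
  calc N (U * diagonal lamstar * Uᵀ - S)
      = N (U * (diagonal lamstar - diagonal lamhat) * Uᵀ) := by rw [hS, mul_sub, sub_mul]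
    _ = N (diagonal lamstar - diagonal lamhat) := hNinv _ _ _ hU hUt
    _ ≤ N (diagonal B.diag - diagonal lamhat) :=
      hmin _ (fun _ => hBpsd.diag_nonneg) (hBpsd.1.diag_le_mul_diag (by linarith) hBκ)
    _ = N (diagonal (B - diagonal lamhat).diag) := by
      rw [diag_sub, diag_diagonal, diagonal_sub]; rfl
    _ ≤ N (B - diagonal lamhat) := apply_diagonal_diag_le N hNsmul hNadd hNinv _
    _ = N (M - S) := by rw [← hMS, hNinv _ _ _ hUt hU]

theorem stmt0 {p : ℕ} (hp : 0 < p) (κ : ℝ) (hκ : 1 ≤ κ)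
    (N : Matrix (Fin p) (Fin p) ℝ → ℝ)
    -- N is a norm:
    (hN0 : ∀ A, N A = 0 ↔ A = 0)
    (hNsmul : ∀ (c : ℝ) (A : Matrix (Fin p) (Fin p) ℝ), N (c • A) = |c| * N A)
    (hNadd : ∀ A B, N (A + B) ≤ N A + N B)
    -- N is orthogonally invariant:
    (hNinv : ∀ (U V A : Matrix (Fin p) (Fin p) ℝ),
      Uᵀ * U = 1 → Vᵀ * V = 1 → N (U * A * V) = N A)
    (S U : Matrix (Fin p) (Fin p) ℝ) (lamhat : Fin p → ℝ)
    (hSsym : S.IsHermitian)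
    (hU : Uᵀ * U = 1)
    (hS : S = U * Matrix.diagonal lamhat * Uᵀ)
    (hanti : ∀ i j : Fin p, i ≤ j → lamhat j ≤ lamhat i)
    (G : Set (Matrix (Fin p) (Fin p) ℝ))
    (hG : G = {M : Matrix (Fin p) (Fin p) ℝ | M.PosSemidef ∧ lamMax M ≤ κ * lamMin M})
    -- the zero matrix is not a minimizer of `Σ ↦ N (Σ - S)` over `G`:
    (hzero : ¬ ∀ M ∈ G, N ((0 : Matrix (Fin p) (Fin p) ℝ) - S) ≤ N (M - S))
    (lamstar : Fin p → ℝ)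
    -- Λ* is feasible:
    (hfeas₁ : ∀ i, 0 ≤ lamstar i)
    (hfeas₂ : ∀ i j, lamstar i ≤ κ * lamstar j)
    -- Λ* minimizes over feasible diagonal matrices:
    (hmin : ∀ lam : Fin p → ℝ, (∀ i, 0 ≤ lam i) → (∀ i j, lam i ≤ κ * lam j) →
      N (Matrix.diagonal lamstar - Matrix.diagonal lamhat) ≤
        N (Matrix.diagonal lam - Matrix.diagonal lamhat)) :
    U * Matrix.diagonal lamstar * Uᵀ ∈ G ∧
      ∀ M ∈ G, N (U * Matrix.diagonal lamstar * Uᵀ - S) ≤ N (M - S) :=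
  stmt0_general κ hκ N hNsmul hNadd hNinv S U lamhat hU hS G hG lamstar hfeas₁ hfeas₂ hmin
end

section
/- Let p, n be positive integers with 1 ≤ n < p, and κ ≥ 1 a real number. Let S be a symmetric p×p real matrix with spectral decomposition S = U · diag(λ̂₁,…,λ̂_p) · Uᵀ, where U is orthogonal, λ̂₁ ≥ ⋯ ≥ λ̂_n > 0 and λ̂_{n+1} = ⋯ = λ̂_p = 0. If Λ* = diag(λ*₁,…,λ*_p) minimizes ‖Λ − diag(λ̂₁,…,λ̂_p)‖_F over all diagonal matrices Λ = diag(λ₁,…,λ_p) satisfying minᵢ λᵢ ≥ 0 and maxᵢ λᵢ ≤ κ·minᵢ λᵢ, then U Λ* Uᵀ is symmetric positive definite, satisfies λ_max(U Λ* Uᵀ) ≤ κ·λ_min(U Λ* Uᵀ), and minimizes ‖Σ − S‖_F over all Σ ∈ F(κ). -/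
/-!
Conjugation by `U` preserves the Frobenius norm and the spectrum, so everything can be compared
with `Λ̂ = diag λ̂`. For a competitor `M`, the matrix `N = Uᵀ M U` has each diagonal entry a convex
combination of the eigenvalues of `M`, so `diag N` is a feasible diagonal; discarding the
off-diagonal part only brings `N` closer to `Λ̂`, whence
`‖U Λ* Uᵀ - S‖ = ‖Λ* - Λ̂‖ ≤ ‖diag N - Λ̂‖ ≤ ‖N - Λ̂‖ = ‖M - S‖`.
Positive definiteness: a vanishing entry of `Λ*` forces `Λ* = 0` by the ratio bound, but the
constant diagonal at the mean of the `λ̂ᵢ` is strictly closer to `Λ̂`.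
-/

open Matrix

/-- The Frobenius norm of a real matrix. -/
noncomputable def frobNorm {p : ℕ} (A : Matrix (Fin p) (Fin p) ℝ) : ℝ :=
  Real.sqrt (∑ i, ∑ j, (A i j) ^ 2)

lemma exists_pos_sum_sq_const_sub_lt {ι : Type*} [Fintype ι] {b : ι → ℝ} (hb : 0 < ∑ i, b i) :
    ∃ c > 0, ∑ i, (c - b i) ^ 2 < ∑ i, b i ^ 2 := by
  have hcard : (0 : ℝ) < Fintype.card ι := by
    obtain ⟨i, -, -⟩ := Finset.exists_ne_zero_of_sum_ne_zero hb.ne'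
    exact_mod_cast Fintype.card_pos_iff.mpr ⟨i⟩
  set c := (∑ i, b i) / Fintype.card ι with hc
  refine ⟨c, div_pos hb hcard, ?_⟩
  have hsum : ∑ i, (c - b i) ^ 2 = ∑ i, b i ^ 2 - c * ∑ i, b i := by
    have hcardc : Fintype.card ι * c = ∑ i, b i := by rw [hc]; field_simp
    simp only [sub_sq, Finset.sum_add_distrib, Finset.sum_sub_distrib, ← Finset.mul_sum,
      Finset.sum_const, Finset.card_univ, nsmul_eq_mul]
    linear_combination c * hcardc
  rw [hsum]
  nlinarith [mul_pos (div_pos hb hcard) hb]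

lemma pos_of_forall_le_sum_sq_const_sub {ι : Type*} [Fintype ι] {κ : ℝ} {b x : ι → ℝ}
    (hb : 0 < ∑ i, b i) (hx₀ : ∀ i, 0 ≤ x i) (hx : ∀ i j, x i ≤ κ * x j)
    (hmin : ∀ c > 0, ∑ i, (x i - b i) ^ 2 ≤ ∑ i, (c - b i) ^ 2) (i : ι) : 0 < x i := by
  by_contra! hi
  have hzero : ∀ j, x j = 0 := fun j =>
    le_antisymm (by simpa [le_antisymm hi (hx₀ i)] using hx j i) (hx₀ j)
  obtain ⟨c, hc, hlt⟩ := exists_pos_sum_sq_const_sub_lt hb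
  have := hmin c hc
  simp only [hzero, zero_sub, neg_sq] at this
  linarith

section Frobenius

variable {p : ℕ}

lemma frobNorm_orthogonal_conj {U : Matrix (Fin p) (Fin p) ℝ} (hU : Uᵀ * U = 1)
    (A : Matrix (Fin p) (Fin p) ℝ) : frobNorm (U * A * Uᵀ) = frobNorm A := by
  have sum_sq_eq_trace : ∀ B : Matrix (Fin p) (Fin p) ℝ, ∑ i, ∑ j, B i j ^ 2 = trace (Bᵀ * B) :=
    fun B => by simp only [trace, diag, mul_apply, transpose_apply, sq]; rw [Finset.sum_comm]
  have hconj : (U * A * Uᵀ)ᵀ * (U * A * Uᵀ) = U * (Aᵀ * (Uᵀ * U) * A) * Uᵀ := by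
    simp only [transpose_mul, transpose_transpose, Matrix.mul_assoc]
  rw [frobNorm, frobNorm, sum_sq_eq_trace, sum_sq_eq_trace, hconj, hU, Matrix.mul_one,
    trace_mul_comm, ← Matrix.mul_assoc, hU, Matrix.one_mul]

lemma frobNorm_diagonal_sub (a b : Fin p → ℝ) :
    frobNorm (diagonal a - diagonal b) = √(∑ i, (a i - b i) ^ 2) := by
  refine congrArg _ (Finset.sum_congr rfl fun i _ => ?_)
  rw [Finset.sum_eq_single i (fun j _ hj => by simp [diagonal_apply_ne _ hj.symm]) (by simp)]
  simp

lemma frobNorm_diagonal_diag_sub_le (A : Matrix (Fin p) (Fin p) ℝ) (b : Fin p → ℝ) :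
    frobNorm (diagonal A.diag - diagonal b) ≤ frobNorm (A - diagonal b) := by
  rw [frobNorm_diagonal_sub]
  refine Real.sqrt_le_sqrt (Finset.sum_le_sum fun i _ => ?_)
  calc (A.diag i - b i) ^ 2 = (A - diagonal b) i i ^ 2 := by simp
    _ ≤ ∑ j, (A - diagonal b) i j ^ 2 :=
      Finset.single_le_sum (f := fun j => (A - diagonal b) i j ^ 2) (fun j _ => sq_nonneg _)
        (Finset.mem_univ i)

end Frobenius

namespace Matrix.IsHermitian

section Spectrum

variable {n : Type*} [Fintype n] [DecidableEq n]

lemma apply_self_eq_sum_eigenvalues_mul_sq {A : Matrix n n ℝ} (hA : A.IsHermitian) (i : n) :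
    A i i = ∑ k, hA.eigenvalues k * (hA.eigenvectorUnitary : Matrix n n ℝ) i k ^ 2 := by
  conv_lhs => rw [hA.spectral_theorem]
  simp [Unitary.conjStarAlgAut_apply, mul_apply, diagonal_apply, sq, mul_comm, mul_left_comm]

lemma sum_sq_eigenvectorUnitary {A : Matrix n n ℝ} (hA : A.IsHermitian) (i : n) :
    ∑ k, (hA.eigenvectorUnitary : Matrix n n ℝ) i k ^ 2 = 1 := by
  have := congrFun (congrFun (Unitary.coe_mul_star_self hA.eigenvectorUnitary) i) i
  simpa [mul_apply, sq] using this

end Spectrum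

section Eigenvalues

variable {p : ℕ}

lemma lamMin_le_apply_self {A : Matrix (Fin p) (Fin p) ℝ} (hA : A.IsHermitian)
    (i : Fin p) : lamMin A ≤ A i i := by
  have hle : ∀ k, lamMin A ≤ hA.eigenvalues k := fun k => by
    rw [lamMin, hA.spectrum_real_eq_range_eigenvalues]
    exact csInf_le (Set.finite_range _).bddBelow ⟨k, rfl⟩
  calc lamMin A = ∑ k, lamMin A * (hA.eigenvectorUnitary : Matrix (Fin p) (Fin p) ℝ) i k ^ 2 := by
        rw [← Finset.mul_sum, hA.sum_sq_eigenvectorUnitary, mul_one]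
    _ ≤ A i i := by
        rw [hA.apply_self_eq_sum_eigenvalues_mul_sq]
        exact Finset.sum_le_sum fun k _ => mul_le_mul_of_nonneg_right (hle k) (sq_nonneg _)

lemma apply_self_le_lamMax {A : Matrix (Fin p) (Fin p) ℝ} (hA : A.IsHermitian)
    (i : Fin p) : A i i ≤ lamMax A := by
  have hle : ∀ k, hA.eigenvalues k ≤ lamMax A := fun k => by
    rw [lamMax, hA.spectrum_real_eq_range_eigenvalues]
    exact le_csSup (Set.finite_range _).bddAbove ⟨k, rfl⟩
  calc A i i ≤ ∑ k, lamMax A * (hA.eigenvectorUnitary : Matrix (Fin p) (Fin p) ℝ) i k ^ 2 := by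
        rw [hA.apply_self_eq_sum_eigenvalues_mul_sq]
        exact Finset.sum_le_sum fun k _ => mul_le_mul_of_nonneg_right (hle k) (sq_nonneg _)
    _ = lamMax A := by rw [← Finset.mul_sum, hA.sum_sq_eigenvectorUnitary, mul_one]

lemma apply_self_le_mul_apply_self {A : Matrix (Fin p) (Fin p) ℝ} (hA : A.IsHermitian)
    {κ : ℝ} (hκ : 0 ≤ κ) (hA_cond : lamMax A ≤ κ * lamMin A) (i j : Fin p) :
    A i i ≤ κ * A j j :=
  calc A i i ≤ lamMax A := hA.apply_self_le_lamMax i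
    _ ≤ κ * lamMin A := hA_cond
    _ ≤ κ * A j j := mul_le_mul_of_nonneg_left (hA.lamMin_le_apply_self j) hκ

end Eigenvalues

end Matrix.IsHermitian

lemma lamMax_le_mul_lamMin {p : ℕ} {A : Matrix (Fin p) (Fin p) ℝ} {κ : ℝ}
    (h : ∀ x ∈ spectrum ℝ A, ∀ y ∈ spectrum ℝ A, x ≤ κ * y) : lamMax A ≤ κ * lamMin A := by
  rcases (spectrum ℝ A).eq_empty_or_nonempty with hempty | hne
  · simp [lamMax, lamMin, hempty]
  · exact h _ (hne.csSup_mem A.finite_real_spectrum) _ (hne.csInf_mem A.finite_real_spectrum)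

section Orthogonal

variable {p : ℕ} {U : Matrix (Fin p) (Fin p) ℝ}

lemma spectrum_orthogonal_conj (hU : Uᵀ * U = 1) (A : Matrix (Fin p) (Fin p) ℝ) :
    spectrum ℝ (U * A * Uᵀ) = spectrum ℝ A :=
  spectrum.units_conjugate (u := ⟨U, Uᵀ, mul_eq_one_comm.mp hU, hU⟩)

lemma posDef_orthogonal_conj_diagonal (hU : Uᵀ * U = 1) {d : Fin p → ℝ} (hd : ∀ i, 0 < d i) :
    (U * diagonal d * Uᵀ).PosDef := by
  have hinj : Function.Injective U.vecMul :=
    vecMul_injective_iff_isUnit.mpr (Units.isUnit ⟨U, Uᵀ, mul_eq_one_comm.mp hU, hU⟩)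
  simpa [conjTranspose_eq_transpose_of_trivial] using
    (PosDef.diagonal hd).mul_mul_conjTranspose_same hinj

end Orthogonal

theorem stmt1_general {p n : ℕ} (hn : 1 ≤ n) (hnp : n < p) (κ : ℝ) (hκ : 1 ≤ κ)
    (S U : Matrix (Fin p) (Fin p) ℝ) (lamhat : Fin p → ℝ)
    (hU : Uᵀ * U = 1)
    (hS : S = U * Matrix.diagonal lamhat * Uᵀ)
    -- λ̂₁ ≥ ⋯ ≥ λ̂_n > 0 and λ̂_{n+1} = ⋯ = λ̂_p = 0 (0-indexed):
    (hpos : ∀ i : Fin p, (i : ℕ) < n → 0 < lamhat i)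
    (hzero : ∀ i : Fin p, n ≤ (i : ℕ) → lamhat i = 0)
    (lamstar : Fin p → ℝ)
    -- Λ* is feasible:
    (hfeas₁ : ∀ i, 0 ≤ lamstar i)
    (hfeas₂ : ∀ i j, lamstar i ≤ κ * lamstar j)
    -- Λ* minimizes the Frobenius distance over feasible diagonal matrices:
    (hmin : ∀ lam : Fin p → ℝ, (∀ i, 0 ≤ lam i) → (∀ i j, lam i ≤ κ * lam j) →
      frobNorm (Matrix.diagonal lamstar - Matrix.diagonal lamhat) ≤
        frobNorm (Matrix.diagonal lam - Matrix.diagonal lamhat)) :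
    (U * Matrix.diagonal lamstar * Uᵀ).PosDef ∧
    lamMax (U * Matrix.diagonal lamstar * Uᵀ) ≤ κ * lamMin (U * Matrix.diagonal lamstar * Uᵀ) ∧
    ∀ M : Matrix (Fin p) (Fin p) ℝ, M.PosDef → lamMax M ≤ κ * lamMin M →
      frobNorm (U * Matrix.diagonal lamstar * Uᵀ - S) ≤ frobNorm (M - S) := by
  have hsum_pos : 0 < ∑ i, lamhat i := by
    refine Finset.sum_pos' (fun i _ => ?_) ⟨⟨0, by omega⟩, Finset.mem_univ _, hpos _ hn⟩
    rcases lt_or_ge (i : ℕ) n with h | h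
    exacts [(hpos i h).le, (hzero i h).ge]
  have hmin_const : ∀ c > 0, ∑ i, (lamstar i - lamhat i) ^ 2 ≤ ∑ i, (c - lamhat i) ^ 2 :=
    fun c hc => by
      have := hmin (fun _ => c) (fun _ => hc.le) (fun _ _ => le_mul_of_one_le_left hc.le hκ)
      rwa [frobNorm_diagonal_sub, frobNorm_diagonal_sub,
        Real.sqrt_le_sqrt_iff (by positivity)] at this
  have hstar_pos := pos_of_forall_le_sum_sq_const_sub hsum_pos hfeas₁ hfeas₂ hmin_const
  refine ⟨posDef_orthogonal_conj_diagonal hU hstar_pos, lamMax_le_mul_lamMin ?_,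
    fun M hM hM_cond => ?_⟩
  · simpa only [spectrum_orthogonal_conj hU, spectrum_diagonal, Set.forall_mem_range]
  have hconj_sub : ∀ A B, U * A * Uᵀ - U * B * Uᵀ = U * (A - B) * Uᵀ := fun A B => by
    rw [Matrix.mul_sub, Matrix.sub_mul]
  set N := Uᵀ * M * U
  have hMN : M = U * N * Uᵀ := by
    simp only [N, ← Matrix.mul_assoc, mul_eq_one_comm.mp hU, Matrix.one_mul]
    rw [Matrix.mul_assoc, mul_eq_one_comm.mp hU, Matrix.mul_one]
  have hN : N.PosSemidef := by
    simpa [conjTranspose_eq_transpose_of_trivial] using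
      hM.posSemidef.conjTranspose_mul_mul_same U
  have hN_cond : lamMax N ≤ κ * lamMin N := by
    rwa [lamMax, lamMin, ← spectrum_orthogonal_conj hU N, ← hMN]
  calc frobNorm (U * diagonal lamstar * Uᵀ - S)
      = frobNorm (diagonal lamstar - diagonal lamhat) := by
        rw [hS, hconj_sub, frobNorm_orthogonal_conj hU]
    _ ≤ frobNorm (diagonal N.diag - diagonal lamhat) :=
        hmin _ (fun _ => hN.diag_nonneg)
          (hN.isHermitian.apply_self_le_mul_apply_self (zero_le_one.trans hκ) hN_cond)
    _ ≤ frobNorm (N - diagonal lamhat) := frobNorm_diagonal_diag_sub_le N lamhat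
    _ = frobNorm (M - S) := by rw [hMN, hS, hconj_sub, frobNorm_orthogonal_conj hU]

theorem stmt1 {p n : ℕ} (hn : 1 ≤ n) (hnp : n < p) (κ : ℝ) (hκ : 1 ≤ κ)
    (S U : Matrix (Fin p) (Fin p) ℝ) (lamhat : Fin p → ℝ)
    (hSsym : S.IsHermitian)
    (hU : Uᵀ * U = 1)
    (hS : S = U * Matrix.diagonal lamhat * Uᵀ)
    -- λ̂₁ ≥ ⋯ ≥ λ̂_n > 0 and λ̂_{n+1} = ⋯ = λ̂_p = 0 (0-indexed):
    (hanti : ∀ i j : Fin p, i ≤ j → lamhat j ≤ lamhat i)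
    (hpos : ∀ i : Fin p, (i : ℕ) < n → 0 < lamhat i)
    (hzero : ∀ i : Fin p, n ≤ (i : ℕ) → lamhat i = 0)
    (lamstar : Fin p → ℝ)
    -- Λ* is feasible:
    (hfeas₁ : ∀ i, 0 ≤ lamstar i)
    (hfeas₂ : ∀ i j, lamstar i ≤ κ * lamstar j)
    -- Λ* minimizes the Frobenius distance over feasible diagonal matrices:
    (hmin : ∀ lam : Fin p → ℝ, (∀ i, 0 ≤ lam i) → (∀ i j, lam i ≤ κ * lam j) →
      frobNorm (Matrix.diagonal lamstar - Matrix.diagonal lamhat) ≤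
        frobNorm (Matrix.diagonal lam - Matrix.diagonal lamhat)) :
    (U * Matrix.diagonal lamstar * Uᵀ).PosDef ∧
    lamMax (U * Matrix.diagonal lamstar * Uᵀ) ≤ κ * lamMin (U * Matrix.diagonal lamstar * Uᵀ) ∧
    ∀ M : Matrix (Fin p) (Fin p) ℝ, M.PosDef → lamMax M ≤ κ * lamMin M →
      frobNorm (U * Matrix.diagonal lamstar * Uᵀ - S) ≤ frobNorm (M - S) :=
  stmt1_general hn hnp κ hκ S U lamhat hU hS hpos hzero lamstar hfeas₁ hfeas₂ hmin
end

section
/- Let p, n be positive integers with 1 ≤ n < p, and κ ≥ 1 a real number. Let S be a symmetric positive semidefinite p×p real matrix of rank n (equivalently, its eigenvalues satisfy λ̂₁ ≥ ⋯ ≥ λ̂_n > 0 = λ̂_{n+1} = ⋯ = λ̂_p). Then every matrix Σ̂ ∈ F(κ) that minimizes ‖Σ − S‖_F over Σ ∈ F(κ) satisfies λ_max(Σ̂) = κ·λ_min(Σ̂); i.e., in the high-dimensional (rank-deficient) setting the condition number of the optimal solution is exactly κ. -/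
open Matrix

/-!
If `Σ` were feasible with slack, `lamMax Σ < κ * lamMin Σ`, then moving a little along the
segment towards `S`, to `M = (1 - t) • Σ + t • S`, keeps it feasible: in the Loewner
order `lamMax` is convex, `lamMin` is concave and `lamMin S ≥ 0`, so the slack shrinks only by
`O(t)`. Since `M - S = (1 - t) • (Σ - S)`, `M` is strictly closer to `S` unless `Σ = S`, which is
impossible because `S` is singular (its rank is `n < p`) while `Σ` is positive definite.
-/

open scoped MatrixOrder

section Eigenvalues

variable {p : ℕ} {A B : Matrix (Fin p) (Fin p) ℝ} {c : ℝ}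

lemma Matrix.IsHermitian.spectrum_real_nonempty {ι : Type*} [Fintype ι] [DecidableEq ι]
    [Nonempty ι] {A : Matrix ι ι ℝ} (hA : A.IsHermitian) : (spectrum ℝ A).Nonempty := by
  rw [hA.spectrum_real_eq_range_eigenvalues]
  exact Set.range_nonempty _

lemma lamMax_le_iff [NeZero p] (hA : A.IsHermitian) :
    lamMax A ≤ c ↔ A ≤ algebraMap ℝ _ c := by
  rw [le_algebraMap_iff_spectrum_le hA]
  exact csSup_le_iff A.finite_real_spectrum.bddAbove hA.spectrum_real_nonempty

lemma le_lamMin_iff [NeZero p] (hA : A.IsHermitian) :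
    c ≤ lamMin A ↔ algebraMap ℝ _ c ≤ A := by
  rw [algebraMap_le_iff_le_spectrum hA]
  exact le_csInf_iff A.finite_real_spectrum.bddBelow hA.spectrum_real_nonempty

lemma lamMin_le_lamMax [NeZero p] (hA : A.IsHermitian) : lamMin A ≤ lamMax A :=
  csInf_le_csSup hA.spectrum_real_nonempty A.finite_real_spectrum.bddBelow
    A.finite_real_spectrum.bddAbove

lemma Matrix.PosSemidef.lamMin_nonneg [NeZero p] (hA : A.PosSemidef) : 0 ≤ lamMin A :=
  (le_lamMin_iff hA.isHermitian).2 (by simpa using hA.nonneg)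

lemma lamMax_convexComb_le [NeZero p] (hA : A.IsHermitian) (hB : B.IsHermitian) {t : ℝ}
    (ht0 : 0 ≤ t) (ht1 : t ≤ 1) :
    lamMax ((1 - t) • A + t • B) ≤ (1 - t) * lamMax A + t * lamMax B := by
  rw [lamMax_le_iff ((hA.smul (.all _)).add (hB.smul (.all _))), map_add, map_mul, map_mul,
    ← Algebra.smul_def, ← Algebra.smul_def]
  exact add_le_add (smul_le_smul_of_nonneg_left ((lamMax_le_iff hA).1 le_rfl) (by linarith))
    (smul_le_smul_of_nonneg_left ((lamMax_le_iff hB).1 le_rfl) ht0)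

lemma le_lamMin_convexComb [NeZero p] (hA : A.IsHermitian) (hB : B.IsHermitian) {t : ℝ}
    (ht0 : 0 ≤ t) (ht1 : t ≤ 1) :
    (1 - t) * lamMin A + t * lamMin B ≤ lamMin ((1 - t) • A + t • B) := by
  rw [le_lamMin_iff ((hA.smul (.all _)).add (hB.smul (.all _))), map_add, map_mul, map_mul,
    ← Algebra.smul_def, ← Algebra.smul_def]
  exact add_le_add (smul_le_smul_of_nonneg_left ((le_lamMin_iff hA).1 le_rfl) (by linarith))
    (smul_le_smul_of_nonneg_left ((le_lamMin_iff hB).1 le_rfl) ht0)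

end Eigenvalues

lemma exists_convexComb_lamMax_le_mul_lamMin {p : ℕ} [NeZero p] {κ : ℝ}
    {A S : Matrix (Fin p) (Fin p) ℝ} (hA : A.PosSemidef) (hS : S.PosSemidef)
    (hslack : lamMax A < κ * lamMin A) :
    ∃ t : ℝ, 0 < t ∧ t < 1 ∧
      lamMax ((1 - t) • A + t • S) ≤ κ * lamMin ((1 - t) • A + t • S) := by
  have hmin_nonneg := hA.lamMin_nonneg
  have hκ : 0 ≤ κ := by nlinarith [lamMin_le_lamMax hA.isHermitian]
  have hS_nonneg : 0 ≤ lamMax S := hS.lamMin_nonneg.trans (lamMin_le_lamMax hS.isHermitian)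
  set ε := κ * lamMin A - lamMax A
  have hε_pos : 0 < ε := by linarith
  set t := ε / (lamMax S + 2 * ε)
  have hden : 0 < lamMax S + 2 * ε := by linarith
  have ht0 : 0 < t := div_pos hε_pos hden
  have ht1 : t < 1 := (div_lt_one hden).2 (by linarith)
  have hstep : t * lamMax S ≤ (1 - t) * ε := by
    rw [div_mul_eq_mul_div, one_sub_div hden.ne', div_mul_eq_mul_div]
    exact div_le_div_of_nonneg_right (by nlinarith) hden.le
  refine ⟨t, ht0, ht1, ?_⟩
  calc lamMax ((1 - t) • A + t • S)
      ≤ (1 - t) * lamMax A + t * lamMax S :=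
        lamMax_convexComb_le hA.isHermitian hS.isHermitian ht0.le ht1.le
    _ ≤ κ * ((1 - t) * lamMin A + t * lamMin S) := by
        nlinarith [mul_nonneg (mul_nonneg hκ ht0.le) hS.lamMin_nonneg]
    _ ≤ κ * lamMin ((1 - t) • A + t • S) :=
        mul_le_mul_of_nonneg_left
          (le_lamMin_convexComb hA.isHermitian hS.isHermitian ht0.le ht1.le) hκ

section Frobenius

attribute [local instance] Matrix.frobeniusNormedAddCommGroup Matrix.frobeniusNormedSpace

variable {p : ℕ}

lemma frobNorm_eq_norm (A : Matrix (Fin p) (Fin p) ℝ) : frobNorm A = ‖A‖ := by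
  rw [frobenius_norm_def, frobNorm, Real.sqrt_eq_rpow]
  simp

lemma frobNorm_convexComb_sub {t : ℝ} (ht1 : t ≤ 1) (A S : Matrix (Fin p) (Fin p) ℝ) :
    frobNorm ((1 - t) • A + t • S - S) = (1 - t) * frobNorm (A - S) := by
  rw [show (1 - t) • A + t • S - S = (1 - t) • (A - S) by module, frobNorm_eq_norm,
    frobNorm_eq_norm, norm_smul, Real.norm_of_nonneg (by linarith)]

lemma frobNorm_pos {A : Matrix (Fin p) (Fin p) ℝ} (hA : A ≠ 0) : 0 < frobNorm A :=
  frobNorm_eq_norm A ▸ norm_pos_iff.2 hA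

end Frobenius

theorem stmt4_general {p n : ℕ} (hnp : n < p) (κ : ℝ)
    (S : Matrix (Fin p) (Fin p) ℝ)
    (hS : S.PosSemidef) (hrank : S.rank = n) :
    ∀ Sighat : Matrix (Fin p) (Fin p) ℝ,
      Sighat.PosDef → lamMax Sighat ≤ κ * lamMin Sighat →
      (∀ M : Matrix (Fin p) (Fin p) ℝ, M.PosDef → lamMax M ≤ κ * lamMin M →
        frobNorm (Sighat - S) ≤ frobNorm (M - S)) →
      lamMax Sighat = κ * lamMin Sighat := by
  intro Sg hSg hfeas hopt
  have : NeZero p := ⟨by omega⟩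
  have hSg_ne : Sg - S ≠ 0 := sub_ne_zero.2 fun h => by
    have := S.rank_of_isUnit (h ▸ hSg.isUnit)
    simp only [Fintype.card_fin] at this
    omega
  refine hfeas.antisymm (not_lt.1 fun hslack => ?_)
  obtain ⟨t, ht0, ht1, hfeasM⟩ := exists_convexComb_lamMax_le_mul_lamMin hSg.posSemidef hS hslack
  have hcloser := hopt _ ((hSg.smul (sub_pos.2 ht1)).add_posSemidef (hS.smul ht0.le)) hfeasM
  rw [frobNorm_convexComb_sub ht1.le] at hcloser
  nlinarith [frobNorm_pos hSg_ne]

theorem stmt4 {p n : ℕ} (hn : 1 ≤ n) (hnp : n < p) (κ : ℝ) (hκ : 1 ≤ κ)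
    (S : Matrix (Fin p) (Fin p) ℝ)
    (hS : S.PosSemidef) (hrank : S.rank = n) :
    ∀ Sighat : Matrix (Fin p) (Fin p) ℝ,
      Sighat.PosDef → lamMax Sighat ≤ κ * lamMin Sighat →
      (∀ M : Matrix (Fin p) (Fin p) ℝ, M.PosDef → lamMax M ≤ κ * lamMin M →
        frobNorm (Sighat - S) ≤ frobNorm (M - S)) →
      lamMax Sighat = κ * lamMin Sighat :=
  stmt4_general hnp κ S hS hrank
end

section
/- Let κ ≥ 1 and λ̂ ≥ 0 be real numbers and define g(μ) := (min(max(μ, λ̂), κμ) − λ̂)² for μ > 0. Then g is convex on the interval (0, ∞), differentiable at every μ > 0 with derivative g′(μ) = 2κ(κμ − λ̂) when κμ < λ̂, g′(μ) = 0 when μ ≤ λ̂ ≤ κμ, and g′(μ) = 2(μ − λ̂) when μ > λ̂, and g′ is continuous on (0, ∞). -/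
/-- `gfun κ λ̂ μ = (min (max μ λ̂) (κμ) − λ̂)²`. -/
noncomputable def gfun (κ lamh μ : ℝ) : ℝ := (min (max μ lamh) (κ * μ) - lamh) ^ 2

/-!
For `μ > 0` and `κ ≥ 1` we have `μ ≤ κμ`, so the clamp `min (max μ λ̂) (κμ)` moves away from `λ̂`
either by `μ - λ̂` (when `λ̂ < μ`) or by `κμ - λ̂` (when `κμ < λ̂`), and never both. Hence
`g(μ) = (λ̂ - κμ)₊² + (μ - λ̂)₊²` on `(0, ∞)`. The square of a positive part is `C¹` with derivative
`2 x₊`, so `g` is `C¹` there with derivative `2 (μ - λ̂)₊ - 2κ (λ̂ - κμ)₊`, which is monotone;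
convexity follows.
-/

open Set

lemma hasDerivAt_max_zero_sq_of_ne {x : ℝ} (hx : x ≠ 0) :
    HasDerivAt (fun y : ℝ => max y 0 ^ 2) (2 * max x 0) x := by
  rcases hx.lt_or_gt with hneg | hpos
  · have hzero : (fun y : ℝ => max y 0 ^ 2) =ᶠ[nhds x] fun _ => 0 := by
      filter_upwards [Iio_mem_nhds hneg] with y hy
      simp [max_eq_right (mem_Iio.mp hy).le]
    rw [max_eq_right hneg.le, mul_zero]
    exact (hasDerivAt_const x 0).congr_of_eventuallyEq hzero
  · have hsq : (fun y : ℝ => max y 0 ^ 2) =ᶠ[nhds x] fun y => y ^ 2 := by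
      filter_upwards [Ioi_mem_nhds hpos] with y hy
      rw [max_eq_left (mem_Ioi.mp hy).le]
    rw [max_eq_left hpos.le]
    simpa using (hasDerivAt_pow 2 x).congr_of_eventuallyEq hsq

-- The kink at `0` is removable since both the function and the candidate derivative are continuous.
lemma hasDerivAt_max_zero_sq (x : ℝ) :
    HasDerivAt (fun y : ℝ => max y 0 ^ 2) (2 * max x 0) x :=
  hasDerivAt_of_hasDerivAt_of_ne' (fun _ hy => hasDerivAt_max_zero_sq_of_ne hy)
    (by fun_prop) (by fun_prop) x

lemma HasDerivAt.max_zero_sq {f : ℝ → ℝ} {f' x : ℝ} (hf : HasDerivAt f f' x) :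
    HasDerivAt (fun y => max (f y) 0 ^ 2) (2 * max (f x) 0 * f') x :=
  (hasDerivAt_max_zero_sq (f x)).comp x hf

lemma gfun_eq_of_pos {κ lamh μ : ℝ} (hκ : 1 ≤ κ) (hμ : 0 < μ) :
    gfun κ lamh μ = max (lamh - κ * μ) 0 ^ 2 + max (μ - lamh) 0 ^ 2 := by
  have hμκ : μ ≤ κ * μ := le_mul_of_one_le_left hμ.le hκ
  unfold gfun
  rcases le_total μ lamh with hle | hle
  · rcases le_total (κ * μ) lamh with hκle | hκle
    · simp [max_eq_right hle, min_eq_right hκle, max_eq_left (sub_nonneg.mpr hκle),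
        max_eq_right (sub_nonpos.mpr hle), sub_sq']
      ring
    · simp [max_eq_right hle, min_eq_left hκle, max_eq_right (sub_nonpos.mpr hκle),
        max_eq_right (sub_nonpos.mpr hle)]
  · simp [max_eq_left hle, min_eq_left hμκ, max_eq_right (sub_nonpos.mpr (hle.trans hμκ)),
      max_eq_left (sub_nonneg.mpr hle)]

noncomputable def gfunDeriv (κ lamh μ : ℝ) : ℝ :=
  2 * max (μ - lamh) 0 - 2 * κ * max (lamh - κ * μ) 0

lemma hasDerivAt_gfun {κ lamh μ : ℝ} (hκ : 1 ≤ κ) (hμ : 0 < μ) :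
    HasDerivAt (gfun κ lamh) (gfunDeriv κ lamh μ) μ := by
  have hsum : HasDerivAt (fun y => max (lamh - κ * y) 0 ^ 2 + max (y - lamh) 0 ^ 2)
      (gfunDeriv κ lamh μ) μ := by
    have hlow := (((hasDerivAt_id' μ).const_mul κ).const_sub lamh).max_zero_sq
    have hhigh := ((hasDerivAt_id' μ).sub_const lamh).max_zero_sq
    exact (hlow.fun_add hhigh).congr_deriv (by rw [gfunDeriv]; ring)
  refine hsum.congr_of_eventuallyEq ?_
  filter_upwards [Ioi_mem_nhds hμ] with y hy
  exact gfun_eq_of_pos hκ hy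

lemma monotone_gfunDeriv {κ : ℝ} (hκ : 0 ≤ κ) (lamh : ℝ) : Monotone (gfunDeriv κ lamh) := by
  intro a b hab
  have hhigh : max (a - lamh) 0 ≤ max (b - lamh) 0 := max_le_max_right 0 (by linarith)
  have hlow : max (lamh - κ * b) 0 ≤ max (lamh - κ * a) 0 :=
    max_le_max_right 0 (by nlinarith)
  unfold gfunDeriv
  nlinarith [mul_le_mul_of_nonneg_left hlow hκ]

lemma continuous_gfunDeriv (κ lamh : ℝ) : Continuous (gfunDeriv κ lamh) := by
  unfold gfunDeriv
  fun_prop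

theorem stmt7_general (κ lamh : ℝ) (hκ : 1 ≤ κ) :
    ConvexOn ℝ (Set.Ioi (0 : ℝ)) (gfun κ lamh) ∧
    (∀ μ : ℝ, 0 < μ → DifferentiableAt ℝ (gfun κ lamh) μ) ∧
    (∀ μ : ℝ, 0 < μ → κ * μ < lamh →
      HasDerivAt (gfun κ lamh) (2 * κ * (κ * μ - lamh)) μ) ∧
    (∀ μ : ℝ, 0 < μ → μ ≤ lamh → lamh ≤ κ * μ →
      HasDerivAt (gfun κ lamh) 0 μ) ∧
    (∀ μ : ℝ, 0 < μ → lamh < μ →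
      HasDerivAt (gfun κ lamh) (2 * (μ - lamh)) μ) ∧
    ContinuousOn (deriv (gfun κ lamh)) (Set.Ioi (0 : ℝ)) := by
  have hderiv : EqOn (deriv (gfun κ lamh)) (gfunDeriv κ lamh) (Ioi 0) :=
    fun μ hμ => (hasDerivAt_gfun hκ hμ).deriv
  have hμκ {μ : ℝ} (hμ : 0 < μ) : μ ≤ κ * μ := le_mul_of_one_le_left hμ.le hκ
  refine ⟨?_, fun μ hμ => (hasDerivAt_gfun hκ hμ).differentiableAt, ?_, ?_, ?_,
    (continuous_gfunDeriv κ lamh).continuousOn.congr hderiv⟩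
  · refine MonotoneOn.convexOn_of_deriv (convex_Ioi 0)
      (fun μ hμ => (hasDerivAt_gfun hκ hμ).continuousAt.continuousWithinAt) ?_ ?_ <;>
      rw [interior_Ioi]
    · exact fun μ hμ => (hasDerivAt_gfun hκ hμ).differentiableAt.differentiableWithinAt
    · exact ((monotone_gfunDeriv (by linarith) lamh).monotoneOn _).congr hderiv.symm
  · intro μ hμ hlt
    convert hasDerivAt_gfun (lamh := lamh) hκ hμ using 1
    rw [gfunDeriv, max_eq_right (by linarith [hμκ hμ]), max_eq_left (by linarith)]
    ring
  · intro μ hμ hle hκle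
    convert hasDerivAt_gfun (lamh := lamh) hκ hμ using 1
    rw [gfunDeriv, max_eq_right (by linarith), max_eq_right (by linarith)]
    ring
  · intro μ hμ hlt
    convert hasDerivAt_gfun (lamh := lamh) hκ hμ using 1
    rw [gfunDeriv, max_eq_left (by linarith), max_eq_right (by linarith [hμκ hμ])]
    ring

theorem stmt7 (κ lamh : ℝ) (hκ : 1 ≤ κ) (hlam : 0 ≤ lamh) :
    ConvexOn ℝ (Set.Ioi (0 : ℝ)) (gfun κ lamh) ∧
    (∀ μ : ℝ, 0 < μ → DifferentiableAt ℝ (gfun κ lamh) μ) ∧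
    (∀ μ : ℝ, 0 < μ → κ * μ < lamh →
      HasDerivAt (gfun κ lamh) (2 * κ * (κ * μ - lamh)) μ) ∧
    (∀ μ : ℝ, 0 < μ → μ ≤ lamh → lamh ≤ κ * μ →
      HasDerivAt (gfun κ lamh) 0 μ) ∧
    (∀ μ : ℝ, 0 < μ → lamh < μ →
      HasDerivAt (gfun κ lamh) (2 * (μ - lamh)) μ) ∧
    ContinuousOn (deriv (gfun κ lamh)) (Set.Ioi (0 : ℝ)) :=
  stmt7_general κ lamh hκ
end

section
/- Let a > 0, b > 0, c > 0, α > 0 be real numbers, define ν(κ) := (aκ² + bκ)/(ακ² + c) for κ > 0, and set κ₁ := (c/α)·(a/b) + √(((c/α)·(a/b))² + c/α). Then ν is strictly increasing on (0, κ₁] and strictly decreasing on [κ₁, ∞); consequently κ₁ is the unique global maximizer of ν on (0, ∞), i.e. ν(κ) ≤ ν(κ₁) for all κ > 0 with equality only at κ = κ₁. -/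
set_option maxHeartbeats 1000000

private lemma mul_pos_cancel' {u v : ℝ} (hv : 0 < v) (h : 0 < u * v) : 0 < u := by
  by_contra hu
  push_neg at hu
  nlinarith

theorem stmt17 (a b c α : ℝ) (ha : 0 < a) (hb : 0 < b) (hc : 0 < c) (hα : 0 < α)
    (ν : ℝ → ℝ) (hdef : ∀ κ : ℝ, ν κ = (a * κ ^ 2 + b * κ) / (α * κ ^ 2 + c))
    (κ₁ : ℝ)
    (hκ₁ : κ₁ = (c / α) * (a / b) + Real.sqrt (((c / α) * (a / b)) ^ 2 + c / α)) :
    StrictMonoOn ν (Set.Ioc (0 : ℝ) κ₁) ∧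
    StrictAntiOn ν (Set.Ici κ₁) ∧
    (∀ κ : ℝ, 0 < κ → κ ≠ κ₁ → ν κ < ν κ₁) := by
  set t : ℝ := (c / α) * (a / b) with ht_def
  have ht : 0 < t := by positivity
  have hs : 0 < c / α := by positivity
  have hsqrt : 0 < Real.sqrt (t ^ 2 + c / α) := Real.sqrt_pos.2 (by positivity)
  have hκpos : 0 < κ₁ := by rw [hκ₁]; linarith
  have hκ2 : 0 < κ₁ ^ 2 := by positivity
  have hsq : Real.sqrt (t ^ 2 + c / α) ^ 2 = t ^ 2 + c / α :=
    Real.sq_sqrt (by positivity)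
  have h3 : κ₁ ^ 2 = 2 * t * κ₁ + c / α := by
    have hκ' : κ₁ - t = Real.sqrt (t ^ 2 + c / α) := by rw [hκ₁]; ring
    have h2 : (κ₁ - t) ^ 2 = t ^ 2 + c / α := by rw [hκ', hsq]
    nlinarith [h2]
  have heq : α * b * κ₁ ^ 2 = 2 * a * c * κ₁ + b * c := by
    have hα' : α ≠ 0 := hα.ne'
    have hb' : b ≠ 0 := hb.ne'
    rw [ht_def] at h3
    field_simp at h3
    nlinarith [h3]
  have key : ∀ x y : ℝ,
      (ν y - ν x) * ((α * x ^ 2 + c) * (α * y ^ 2 + c)) =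
        (y - x) * (a * c * (x + y) + b * c - α * b * (x * y)) := by
    intro x y
    have d1 : α * x ^ 2 + c ≠ 0 := by positivity
    have d2 : α * y ^ 2 + c ≠ 0 := by positivity
    rw [hdef, hdef]
    field_simp
    ring
  have hmono : StrictMonoOn ν (Set.Ioc (0 : ℝ) κ₁) := by
    intro x hx y hy hxy
    obtain ⟨hx0, hxκ⟩ := hx
    obtain ⟨hy0, hyκ⟩ := hy
    have hxκ' : x < κ₁ := lt_of_lt_of_le hxy hyκ
    have hg : 0 < a * c * (x + y) + b * c - α * b * (x * y) := by
      have hA : (a * c * (x + y) + b * c - α * b * (x * y)) * κ₁ ^ 2 =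
          a * c * κ₁ * (x * (κ₁ - y) + y * (κ₁ - x)) + b * c * (κ₁ ^ 2 - x * y) := by
        linear_combination (-(x * y)) * heq
      refine mul_pos_cancel' hκ2 ?_
      rw [hA]
      have h1 : 0 ≤ x * (κ₁ - y) := mul_nonneg hx0.le (by linarith)
      have h2 : 0 < y * (κ₁ - x) := mul_pos hy0 (by linarith)
      have h4 : 0 < κ₁ ^ 2 - x * y := by
        nlinarith [mul_pos hy0 (sub_pos.2 hxκ'), mul_nonneg hκpos.le (sub_nonneg.2 hyκ)]
      have h5 : 0 < a * c * κ₁ := by positivity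
      have h6 : 0 < b * c := by positivity
      nlinarith [mul_pos h5 (by linarith : (0:ℝ) < x * (κ₁ - y) + y * (κ₁ - x)),
        mul_pos h6 h4]
    have hpos : 0 < (α * x ^ 2 + c) * (α * y ^ 2 + c) := by positivity
    have hd := key x y
    have : 0 < ν y - ν x := by
      refine mul_pos_cancel' hpos ?_
      rw [hd]
      exact mul_pos (by linarith) hg
    linarith
  have hanti : StrictAntiOn ν (Set.Ici κ₁) := by
    intro x hx y hy hxy
    have hxκ : κ₁ ≤ x := hx
    have hyκ : κ₁ < y := lt_of_le_of_lt hxκ hxy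
    have hx0 : 0 < x := lt_of_lt_of_le hκpos hxκ
    have hy0 : 0 < y := hκpos.trans hyκ
    have hg : 0 < -(a * c * (x + y) + b * c - α * b * (x * y)) := by
      have hA : (-(a * c * (x + y) + b * c - α * b * (x * y))) * κ₁ ^ 2 =
          a * c * κ₁ * (x * (y - κ₁) + y * (x - κ₁)) + b * c * (x * y - κ₁ ^ 2) := by
        linear_combination (x * y) * heq
      refine mul_pos_cancel' hκ2 ?_
      rw [hA]
      have h1 : 0 < x * (y - κ₁) := mul_pos hx0 (by linarith)
      have h2 : 0 ≤ y * (x - κ₁) := mul_nonneg hy0.le (by linarith)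
      have h4 : 0 < x * y - κ₁ ^ 2 := by
        nlinarith [mul_nonneg (sub_nonneg.2 hxκ) hy0.le, mul_pos hκpos (sub_pos.2 hyκ)]
      have h5 : 0 < a * c * κ₁ := by positivity
      have h6 : 0 < b * c := by positivity
      nlinarith [mul_pos h5 (by linarith : (0:ℝ) < x * (y - κ₁) + y * (x - κ₁)),
        mul_pos h6 h4]
    have hpos : 0 < (α * x ^ 2 + c) * (α * y ^ 2 + c) := by positivity
    have hd := key x y
    have : 0 < ν x - ν y := by
      refine mul_pos_cancel' hpos ?_
      have : (ν x - ν y) * ((α * x ^ 2 + c) * (α * y ^ 2 + c)) =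
          (y - x) * (-(a * c * (x + y) + b * c - α * b * (x * y))) := by
        linear_combination -hd
      rw [this]
      exact mul_pos (by linarith) hg
    linarith
  refine ⟨hmono, hanti, ?_⟩
  intro κ hκ hne
  rcases lt_or_gt_of_ne hne with h | h
  · exact hmono ⟨hκ, h.le⟩ ⟨hκpos, le_refl _⟩ h
  · exact hanti (le_refl κ₁) h.le h
end

section
/- Let a > 0, b > 0, c > 0, α > 0 be real numbers, define h(κ) := (aκ + b)/(ακ² + c) and ν(κ) := (aκ² + bκ)/(ακ² + c) for κ > 0, and set κ₀ := √((b/a)² + c/α) − b/a and κ₁ := (c/α)·(a/b) + √(((c/α)·(a/b))² + c/α). Then κ₀ ≤ √(c/α) ≤ κ₁, and for all real s, t with κ₀ ≤ s ≤ t ≤ κ₁ one has h(s) ≥ h(t) and ν(s) ≤ ν(t); i.e., on the interval [κ₀, κ₁] the lower truncation level h is nonincreasing and the upper truncation level ν is nondecreasing in κ. -/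
/-!
Both monotonicity claims reduce, after clearing the positive denominators, to the sign of a
quadratic expression in `s` and `t`: `h t ≤ h s` follows from `c/α ≤ st + (b/a)(s + t)`, i.e.
`(b/a)² + c/α ≤ (s + b/a)(t + b/a)`, which holds once `s, t ≥ κ₀` because `κ₀ + b/a` is the
square root of the left-hand side. Likewise `ν s ≤ ν t` follows from `st ≤ d(s + t) + c/α` with
`d = (c/α)(a/b)`, i.e. `(s - d)(t - d) ≤ d² + c/α`, which holds for `0 ≤ s ≤ t ≤ κ₁` because
`κ₁ - d` is the square root of the right-hand side.
-/

open Real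

namespace TruncationLevel

noncomputable def lower (a b c α κ : ℝ) : ℝ := (a * κ + b) / (α * κ ^ 2 + c)

noncomputable def upper (a b c α κ : ℝ) : ℝ := (a * κ ^ 2 + b * κ) / (α * κ ^ 2 + c)

theorem lower_le_lower {a b c α s t : ℝ} (ha : 0 < a) (hc : 0 < c) (hα : 0 < α) (hst : s ≤ t)
    (hkey : c / α ≤ s * t + b / a * (s + t)) : lower a b c α t ≤ lower a b c α s := by
  have hkey' : a * c ≤ α * (a * (s * t) + b * (s + t)) := by
    have := mul_le_mul_of_nonneg_left hkey (mul_pos ha hα).le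
    field_simp at this
    linarith
  unfold lower
  rw [div_le_div_iff₀ (by positivity) (by positivity)]
  have hfactor : (a * s + b) * (α * t ^ 2 + c) - (a * t + b) * (α * s ^ 2 + c)
      = (t - s) * (α * (a * (s * t) + b * (s + t)) - a * c) := by ring
  linarith [mul_nonneg (sub_nonneg.2 hst) (sub_nonneg.2 hkey')]

theorem upper_le_upper {a b c α s t : ℝ} (hb : 0 < b) (hc : 0 < c) (hα : 0 < α) (hst : s ≤ t)
    (hkey : s * t ≤ c / α * (a / b) * (s + t) + c / α) : upper a b c α s ≤ upper a b c α t := by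
  have hkey' : b * α * (s * t) ≤ a * c * (s + t) + b * c := by
    have := mul_le_mul_of_nonneg_left hkey (mul_pos hb hα).le
    field_simp at this
    linarith
  unfold upper
  rw [div_le_div_iff₀ (by positivity) (by positivity)]
  have hfactor : (a * t ^ 2 + b * t) * (α * s ^ 2 + c) - (a * s ^ 2 + b * s) * (α * t ^ 2 + c)
      = (t - s) * (a * c * (s + t) + b * c - b * α * (s * t)) := by ring
  linarith [mul_nonneg (sub_nonneg.2 hst) (sub_nonneg.2 hkey')]

end TruncationLevel

theorem sqrt_sq_add_sub_le_sqrt {e p : ℝ} (he : 0 ≤ e) (hp : 0 ≤ p) :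
    √(e ^ 2 + p) - e ≤ √p := by
  rw [sub_le_iff_le_add, sqrt_le_left (by positivity)]
  nlinarith [sq_sqrt hp, sqrt_nonneg p]

theorem sqrt_sq_add_sub_nonneg {e p : ℝ} (hp : 0 ≤ p) : 0 ≤ √(e ^ 2 + p) - e :=
  sub_nonneg.2 (le_sqrt_of_sq_le (by linarith))

theorem sqrt_le_add_sqrt_sq_add {d p : ℝ} (hd : 0 ≤ d) : √p ≤ d + √(d ^ 2 + p) := by
  have : √p ≤ √(d ^ 2 + p) := sqrt_le_sqrt (by nlinarith)
  linarith

theorem le_mul_add_of_sqrt_sq_add_sub_le {e p s t : ℝ} (hp : 0 ≤ p)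
    (hs : √(e ^ 2 + p) - e ≤ s) (ht : √(e ^ 2 + p) - e ≤ t) : p ≤ s * t + e * (s + t) := by
  set w := √(e ^ 2 + p)
  have hw : w ^ 2 = e ^ 2 + p := sq_sqrt (by positivity)
  have : w * w ≤ (s + e) * (t + e) :=
    mul_le_mul (by linarith) (by linarith) (sqrt_nonneg _) (by linarith [sqrt_nonneg (e ^ 2 + p)])
  nlinarith

theorem mul_le_mul_add_of_le_add_sqrt_sq_add {d p s t : ℝ} (hp : 0 ≤ p)
    (hs : 0 ≤ s) (hst : s ≤ t) (ht : t ≤ d + √(d ^ 2 + p)) : s * t ≤ d * (s + t) + p := by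
  set w := √(d ^ 2 + p)
  have hw : w ^ 2 = d ^ 2 + p := sq_sqrt (by positivity)
  have hdw : d ≤ w := le_sqrt_of_sq_le (by linarith)
  nlinarith [mul_nonneg hs (sub_nonneg.2 hst), mul_nonneg (sub_nonneg.2 hst) (sub_nonneg.2 ht)]

open TruncationLevel in
theorem stmt18 (a b c α : ℝ) (ha : 0 < a) (hb : 0 < b) (hc : 0 < c) (hα : 0 < α)
    (h ν : ℝ → ℝ)
    (hdef : ∀ κ : ℝ, h κ = (a * κ + b) / (α * κ ^ 2 + c))
    (hνdef : ∀ κ : ℝ, ν κ = (a * κ ^ 2 + b * κ) / (α * κ ^ 2 + c))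
    (κ₀ κ₁ : ℝ)
    (hκ₀ : κ₀ = Real.sqrt ((b / a) ^ 2 + c / α) - b / a)
    (hκ₁ : κ₁ = (c / α) * (a / b) + Real.sqrt (((c / α) * (a / b)) ^ 2 + c / α)) :
    κ₀ ≤ Real.sqrt (c / α) ∧ Real.sqrt (c / α) ≤ κ₁ ∧
    ∀ s t : ℝ, κ₀ ≤ s → s ≤ t → t ≤ κ₁ → h t ≤ h s ∧ ν s ≤ ν t := by
  obtain rfl : h = lower a b c α := funext hdef
  obtain rfl : ν = upper a b c α := funext hνdef
  have hp : 0 ≤ c / α := by positivity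
  subst hκ₀ hκ₁
  refine ⟨sqrt_sq_add_sub_le_sqrt (by positivity) hp, sqrt_le_add_sqrt_sq_add (by positivity),
    fun s t hs hst ht => ⟨?_, ?_⟩⟩
  · exact lower_le_lower ha hc hα hst
      (le_mul_add_of_sqrt_sq_add_sub_le hp hs (hs.trans hst))
  · exact upper_le_upper hb hc hα hst
      (mul_le_mul_add_of_le_add_sqrt_sq_add hp
        ((sqrt_sq_add_sub_nonneg hp).trans hs) hst ht)
end
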